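/- Let X₁, X₂, … be i.i.d. χ²₁ random variables and let T_d = d² · min{X₁,…,X_d}. Then T_d converges in distribution as d → ∞ to the distribution with density f(x) = (1/√(2πx)) exp(−√(2x/π)) for x > 0, equivalently with CDF G(x) = 1 − exp(−√(2x/π)). -/

import Mathlib

/-!
By independence, `P(d² · min_{i<d} Xᵢ ≤ x) = 1 - (1 - F(x / d²))^d` with `F` the `χ²₁` CDF.
Since `F(t) = P(|Z| ≤ √t)`, the fundamental theorem of calculus for the symmetric integral of
the Gaussian density gives `F(t) / √t → 2 φ(0) = √(2/π)` as `t → 0⁺`, hence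
`d · F(x / d²) → √(2x/π)` and `(1 - F(x / d²))^d → exp(-√(2x/π))`.
-/

open MeasureTheory ProbabilityTheory Filter Real

noncomputable def chiSqOne : Measure ℝ :=
  Measure.map (fun z : ℝ => z ^ 2) (gaussianReal 0 1)

open Set Topology

lemma Continuous.hasDerivAt_integral_neg_self {f : ℝ → ℝ} (hf : Continuous f) :
    HasDerivAt (fun u => ∫ z in -u..u, f z) (2 * f 0) 0 := by
  have hF (a : ℝ) : HasDerivAt (fun u => ∫ z in 0..u, f z) (f a) a :=
    (hf.integral_hasStrictDerivAt 0 a).hasDerivAt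
  have hFneg : HasDerivAt (fun u => ∫ z in 0..-u, f z) (f 0 * -1) 0 := by
    simpa [Function.comp_def] using (hF (-0)).comp (0 : ℝ) (hasDerivAt_neg' (0 : ℝ))
  have hsplit : (fun u => ∫ z in -u..u, f z)
      = fun u => (∫ z in 0..u, f z) - ∫ z in 0..-u, f z := by
    funext u
    rw [intervalIntegral.integral_interval_sub_left (hf.intervalIntegrable _ _)
      (hf.intervalIntegrable _ _)]
  rw [hsplit]
  exact ((hF 0).sub hFneg).congr_deriv (by ring)

lemma Continuous.tendsto_integral_neg_self_div {f : ℝ → ℝ} (hf : Continuous f) :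
    Tendsto (fun u => (∫ z in -u..u, f z) / u) (𝓝[>] 0) (𝓝 (2 * f 0)) := by
  refine ((hasDerivAt_iff_tendsto_slope.mp hf.hasDerivAt_integral_neg_self).mono_left
    (nhdsWithin_mono _ fun u hu => ne_of_gt hu)).congr fun u => ?_
  simp [slope_def_field]

lemma tendsto_nat_mul_comp_div_sq {F : ℝ → ℝ} {c : ℝ}
    (hF : Tendsto (fun t => F t / √t) (𝓝[>] 0) (𝓝 c)) {x : ℝ} (hx : 0 < x) :
    Tendsto (fun d : ℕ => d * F (x / d ^ 2)) atTop (𝓝 (√x * c)) := by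
  have ht : Tendsto (fun d : ℕ => x / (d : ℝ) ^ 2) atTop (𝓝[>] 0) := by
    refine tendsto_nhdsWithin_iff.mpr ⟨tendsto_const_nhds.div_atTop
      ((tendsto_pow_atTop two_ne_zero).comp tendsto_natCast_atTop_atTop), ?_⟩
    filter_upwards [eventually_gt_atTop 0] with d hd
    exact div_pos hx (by positivity)
  refine ((hF.comp ht).const_mul √x).congr' ?_
  filter_upwards [eventually_gt_atTop 0] with d hd
  have hd' : (0 : ℝ) < d := by exact_mod_cast hd
  simp only [Function.comp_apply, sqrt_div' _ (sq_nonneg (d : ℝ)), sqrt_sq hd'.le]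
  field_simp [(sqrt_pos.mpr hx).ne']

lemma Set.Finite.csInf_image_le_iff {ι : Type*} {s : Set ι} (hs : s.Finite) (hne : s.Nonempty)
    (f : ι → ℝ) (a : ℝ) : sInf (f '' s) ≤ a ↔ ∃ i ∈ s, f i ≤ a := by
  rw [← not_lt, (hs.image f).lt_csInf_iff (hne.image f)]
  simp

section IndependentMinimum

variable {Ω : Type*} [MeasurableSpace Ω] {μ : Measure Ω} {X : ℕ → Ω → ℝ} {ν : Measure ℝ}

lemma ProbabilityTheory.iIndepFun.measure_biInter_preimage_eq_pow
    (hmeas : ∀ i, Measurable (X i)) (hindep : iIndepFun X μ) (hlaw : ∀ i, μ.map (X i) = ν)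
    (d : ℕ) {s : Set ℝ} (hs : MeasurableSet s) : μ (⋂ i ∈ Finset.range d, X i ⁻¹' s) = ν s ^ d := by
  rw [hindep.measure_inter_preimage_eq_mul _ fun _ _ => hs]
  simp [← Measure.map_apply (hmeas _) hs, hlaw]

lemma measureReal_sq_mul_sInf_image_le [IsProbabilityMeasure μ] [IsProbabilityMeasure ν]
    (hmeas : ∀ i, Measurable (X i)) (hindep : iIndepFun X μ) (hlaw : ∀ i, μ.map (X i) = ν)
    (x : ℝ) {d : ℕ} (hd : 0 < d) :
    μ.real {ω | (d : ℝ) ^ 2 * sInf ((fun i => X i ω) '' Iio d) ≤ x}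
      = 1 - (1 - ν.real (Iic (x / d ^ 2))) ^ d := by
  have hevent : {ω | (d : ℝ) ^ 2 * sInf ((fun i => X i ω) '' Iio d) ≤ x}
      = (⋂ i ∈ Finset.range d, X i ⁻¹' Ioi (x / d ^ 2))ᶜ := by
    ext ω
    rw [mem_ofPred_eq, ← le_div_iff₀' (by positivity), (finite_Iio d).csInf_image_le_iff ⟨0, hd⟩]
    simp
  have hmeasI : MeasurableSet (⋂ i ∈ Finset.range d, X i ⁻¹' Ioi (x / d ^ 2)) :=
    Finset.measurableSet_biInter _ fun i _ => hmeas i measurableSet_Ioi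
  rw [hevent, probReal_compl_eq_one_sub hmeasI, measureReal_def,
    hindep.measure_biInter_preimage_eq_pow hmeas hlaw d measurableSet_Ioi, ENNReal.toReal_pow,
    ← measureReal_def, ← compl_Iic, probReal_compl_eq_one_sub measurableSet_Iic]

end IndependentMinimum

instance : IsProbabilityMeasure chiSqOne :=
  Measure.isProbabilityMeasure_map (by fun_prop)

lemma chiSqOne_real_Iic {t : ℝ} (ht : 0 ≤ t) :
    chiSqOne.real (Iic t) = ∫ z in -√t..√t, gaussianPDFReal 0 1 z := by
  have hpre : (fun z : ℝ => z ^ 2) ⁻¹' Iic t = Icc (-√t) √t := by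
    ext z; exact Real.sq_le ht
  rw [measureReal_def, chiSqOne, Measure.map_apply (by fun_prop) measurableSet_Iic, hpre,
    gaussianReal_apply_eq_integral _ one_ne_zero, ENNReal.toReal_ofReal
      (setIntegral_nonneg measurableSet_Icc fun z _ => gaussianPDFReal_nonneg _ _ _),
    integral_Icc_eq_integral_Ioc, intervalIntegral.integral_of_le (neg_le_self (sqrt_nonneg t))]

lemma two_mul_gaussianPDFReal_zero : 2 * gaussianPDFReal 0 1 0 = √(2 / π) := by
  rw [gaussianPDFReal, show (2 : ℝ) / π = 4 / (2 * π) by field_simp; norm_num,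
    sqrt_div' _ (by positivity), show (4 : ℝ) = 2 ^ 2 by norm_num, sqrt_sq (by norm_num)]
  simp [div_eq_mul_inv]

lemma tendsto_chiSqOne_real_Iic_div_sqrt :
    Tendsto (fun t => chiSqOne.real (Iic t) / √t) (𝓝[>] 0) (𝓝 √(2 / π)) := by
  have hsqrt : Tendsto (√·) (𝓝[>] 0) (𝓝[>] 0) :=
    tendsto_nhdsWithin_iff.mpr
      ⟨by simpa using (continuous_sqrt.tendsto 0).mono_left nhdsWithin_le_nhds,
        eventually_nhdsWithin_of_forall fun t ht => sqrt_pos.mpr ht⟩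
  have hcont : Continuous (gaussianPDFReal 0 1) := by
    rw [gaussianPDFReal_def]; fun_prop
  rw [← two_mul_gaussianPDFReal_zero]
  refine (hcont.tendsto_integral_neg_self_div.comp hsqrt).congr' ?_
  filter_upwards [self_mem_nhdsWithin] with t ht
  simp [chiSqOne_real_Iic (le_of_lt ht)]

/-- Let `X₁, X₂, …` be i.i.d. `χ²₁` and `T_d = d² · min{X₁,…,X_d}`. Then `T_d` converges in
distribution to the law with CDF `G(x) = 1 − exp(−√(2x/π))` (density
`(1/√(2πx)) exp(−√(2x/π))` on `x > 0`): the CDFs of `T_d` converge pointwise to `G` at every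
continuity point `x > 0`. -/
theorem stmt7 {Ω : Type*} [MeasurableSpace Ω] {μ : Measure Ω} [IsProbabilityMeasure μ]
    (X : ℕ → Ω → ℝ)
    (hmeas : ∀ i, Measurable (X i))
    (hindep : iIndepFun X μ)
    (hlaw : ∀ i, Measure.map (X i) μ = chiSqOne)
    (x : ℝ) (hx : 0 < x) :
    Tendsto (fun d : ℕ =>
        (μ {ω | (d : ℝ) ^ 2 * sInf ((fun i => X i ω) '' Set.Iio d) ≤ x}).toReal)
      atTop (nhds (1 - Real.exp (-Real.sqrt (2 * x / π)))) := by
  have hrate : Tendsto (fun d : ℕ => d * -chiSqOne.real (Iic (x / d ^ 2))) atTop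
      (𝓝 (-√(2 * x / π))) := by
    have hlim := tendsto_nat_mul_comp_div_sq tendsto_chiSqOne_real_Iic_div_sqrt hx
    rw [← sqrt_mul hx.le, ← mul_div_assoc, mul_comm x] at hlim
    simpa only [mul_neg] using hlim.neg
  refine (tendsto_const_nhds.sub (tendsto_one_add_pow_exp_of_tendsto hrate)).congr' ?_
  filter_upwards [eventually_gt_atTop 0] with d hd
  rw [← measureReal_def, measureReal_sq_mul_sInf_image_le hmeas hindep hlaw x hd]
  ring
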